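/- (Duality formula) Let g ∈ L^∞(X) with g ≥ 0, and let μ be a countably additive H-valued measure on X with finite total variation, with Radon–Nikodym decomposition μ = h γ + μ^s (h ∈ L¹_γ(X; H), μ^s singular with respect to γ). Then ∫_X √(g² + |h|²_H) dγ + |μ^s|(X) = sup{ ∫_X [Φ, dμ]_H + ∫_X g ξ dγ : Φ ∈ L¹_μ(X, H), ξ ∈ L¹_μ(X), |Φ|²_H + |ξ|² ≤ 1 a.e. in X }. -/

import Mathlib

open MeasureTheory ProbabilityTheory Filter Topology Set
open scoped ENNReal RealInnerProductSpace symmDiff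

noncomputable section

variable {X : Type*} [NormedAddCommGroup X] [NormedSpace ℝ X] [MeasurableSpace X] [BorelSpace X]
  [CompleteSpace X] [SecondCountableTopology X]
variable {H : Type*} [NormedAddCommGroup H] [InnerProductSpace ℝ H] [CompleteSpace H]

/-- `γ` is a centered Gaussian measure: a probability measure whose pushforward under every
continuous linear functional is a centered Gaussian on `ℝ`. -/
def IsCenteredGaussian (γ : Measure X) : Prop :=
  IsProbabilityMeasure γ ∧ ∀ L : X →L[ℝ] ℝ, ∃ v : NNReal, γ.map L = gaussianReal 0 v

/-- Non-degenerate centered Gaussian measure. -/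
def IsNondegGaussian (γ : Measure X) : Prop :=
  IsCenteredGaussian γ ∧ ∀ L : X →L[ℝ] ℝ, L ≠ 0 → γ.map L ≠ gaussianReal 0 0

/-- The reproducing kernel `𝓗`: the closure in `L²_γ(X)` of the continuous linear functionals. -/
def reprKernel (γ : Measure X) : Set (Lp ℝ 2 γ) :=
  closure {f : Lp ℝ 2 γ | ∃ L : X →L[ℝ] ℝ, (f : X → ℝ) =ᵐ[γ] fun x => L x}

/-- The map `R : 𝓗 → X`, `R ĥ = ∫ x ĥ(x) dγ` (Bochner integral). -/
def RMap (γ : Measure X) (f : Lp ℝ 2 γ) : X := ∫ x, f x • x ∂γ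

/-- Data describing the Cameron–Martin space `H = R(𝓗)` of the Wiener space `(X, γ)`:
`T : H → 𝓗 ⊆ L²_γ(X)` is the isometry `h ↦ ĥ` (so that `[h₁,h₂]_H = ⟨ĥ₁,ĥ₂⟩_{L²}` and
`R ĥ = h`), together with a fixed orthonormal basis `h_i = Q x_i*` of `H` and the associated
functionals `x_i* ∈ X*`. -/
structure WienerBasis (γ : Measure X) (H : Type*) [NormedAddCommGroup H]
    [InnerProductSpace ℝ H] where
  T : H →ₗᵢ[ℝ] Lp ℝ 2 γ
  mem_T : ∀ h : H, T h ∈ reprKernel γ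
  surj_T : ∀ f ∈ reprKernel γ, ∃ h : H, T h = f
  b : ℕ → H
  ortho : Orthonormal ℝ b
  complete : ⊤ ≤ (Submodule.span ℝ (Set.range b)).topologicalClosure
  xstar : ℕ → X →L[ℝ] ℝ
  hx : ∀ i, (T (b i) : X → ℝ) =ᵐ[γ] fun x => xstar i x

variable {γ : Measure X}

/-- The basis vector `h_i`, viewed as an element of `X` (via `R`). -/
def WienerBasis.dir (W : WienerBasis γ H) (i : ℕ) : X := RMap γ (W.T (W.b i))

/-- Cylindrical `C¹` bounded functions `v ∘ Π_m`. -/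
def IsCylFun (W : WienerBasis γ H) (φ : X → ℝ) : Prop :=
  ∃ (m : ℕ) (v : (Fin m → ℝ) → ℝ), ContDiff ℝ 1 v ∧ (∃ M, ∀ y, |v y| ≤ M) ∧
    ∀ x, φ x = v fun i => W.xstar i x

/-- Cylindrical `C¹` bounded vector fields: the span of `φ h`, `φ ∈ FC¹_b(X)`, `h ∈ H`. -/
def IsCylVF (W : WienerBasis γ H) (Φ : X → H) : Prop :=
  ∃ (n : ℕ) (φ : Fin n → X → ℝ) (h : Fin n → H),
    (∀ k, IsCylFun W (φ k)) ∧ ∀ x, Φ x = ∑ k, φ k x • h k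

/-- The Gaussian divergence `div_γ Φ = Σ_i ∂*_{h_i} [Φ, h_i]_H`, where
`∂*_h u = ∂u/∂h − ĥ u`. -/
def divG (W : WienerBasis γ H) (Φ : X → H) (x : X) : ℝ :=
  ∑' i, (lineDeriv ℝ (fun y => ⟪Φ y, W.b i⟫) x (W.dir i)
          - (W.T (W.b i) : X → ℝ) x * ⟪Φ x, W.b i⟫)

/-- The Gaussian total variation
`|D_γ u|(X) = sup {∫ u div_γ Φ dγ : Φ ∈ FC¹_b(X,H), |Φ|_H ≤ 1}`. -/
def gaussTV (W : WienerBasis γ H) (u : X → ℝ) : ℝ≥0∞ :=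
  ⨆ Φ : {Φ : X → H // IsCylVF W Φ ∧ ∀ x, ‖Φ x‖ ≤ 1},
    ENNReal.ofReal (∫ x, u x * divG W Φ.1 x ∂γ)

/-- `u ∈ BV_γ(X)`. -/
def MemBVgauss (W : WienerBasis γ H) (u : X → ℝ) : Prop :=
  Integrable u γ ∧ gaussTV W u ≠ ⊤

/-- The Gaussian perimeter `P_γ(E) = |D_γ χ_E|(X)`. -/
def perimeterG (W : WienerBasis γ H) (E : Set X) : ℝ≥0∞ :=
  gaussTV W (E.indicator (fun _ => (1 : ℝ)))

/-- The Gaussian cumulative distribution function `Φ`. -/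
def gaussPhi (x : ℝ) : ℝ :=
  (Real.sqrt (2 * Real.pi))⁻¹ * ∫ t in Set.Iic x, Real.exp (-(t ^ 2) / 2)

/-- `α = Φ⁻¹`. -/
def gaussAlpha : ℝ → ℝ := Function.invFun gaussPhi

/-- `α = Φ⁻¹` extended to `[−∞, +∞]` (with `α(p) = −∞` for `p ≤ 0`, `α(p) = +∞` for `p ≥ 1`). -/
def gaussAlphaE (p : ℝ) : EReal :=
  if p ≤ 0 then ⊥ else if 1 ≤ p then ⊤ else (gaussAlpha p : EReal)

/-- The Gaussian isoperimetric function `𝒰 = Φ' ∘ α`. -/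
def isopU (p : ℝ) : ℝ :=
  if p ≤ 0 ∨ 1 ≤ p then 0
  else Real.exp (-(gaussAlpha p) ^ 2 / 2) / Real.sqrt (2 * Real.pi)

/-- The σ-algebra generated by the first `m` coordinates `Π_m = (x₁*, …, x_m*)`. -/
def cylSigma (W : WienerBasis γ H) (m : ℕ) : MeasurableSpace X :=
  MeasurableSpace.comap (fun x => fun i : Fin m => W.xstar i x) inferInstance

/-- The canonical cylindrical approximation `𝔼_m u` (conditional expectation given `Π_m`). -/
def condExpCyl (γ : Measure X) (W : WienerBasis γ H) (m : ℕ) (u : X → ℝ) : X → ℝ :=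
  γ[u | cylSigma W m]

/-- The Ehrhard symmetral of `E ⊆ X` along the first `m` variables (`m ≥ 1`):
`E* = {x : x_m < α(𝔼_{m−1} χ_E (x))}`. -/
def ehrhardSet (γ : Measure X) (W : WienerBasis γ H) (m : ℕ) (E : Set X) : Set X :=
  {x | ((W.xstar (m - 1) x : ℝ) : EReal)
        < gaussAlphaE (condExpCyl γ W (m - 1) (E.indicator fun _ => (1 : ℝ)) x)}

/-- The `m`-dimensional Ehrhard symmetrization of a function:
`u*(x) = inf {t : x ∉ E_t*}` where `E_t* = ({u > t})*`. -/
def ehrhardSymmFun (γ : Measure X) (W : WienerBasis γ H) (m : ℕ) (u : X → ℝ) (x : X) : ℝ :=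
  sInf {t : ℝ | x ∉ ehrhardSet γ W m {y | t < u y}}

/-- The coordinate `∂u/∂h_i` of the gradient `∇_H u`. -/
def gradCoord (W : WienerBasis γ H) (u : X → ℝ) (i : ℕ) (x : X) : ℝ :=
  lineDeriv ℝ u x (W.dir i)

/-- `G = (G_i)` is the (coordinate representation of the) gradient `∇_H u` of `u ∈ H¹_γ(X)`:
`u` is an `L²`-limit of cylindrical `C¹` bounded functions whose gradients converge to `G`
in `L²(X; H)`. -/
def HasHGradient (γ : Measure X) (W : WienerBasis γ H) (u : X → ℝ) (G : ℕ → X → ℝ) : Prop :=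
  MemLp u 2 γ ∧ ∃ un : ℕ → X → ℝ, (∀ n, IsCylFun W (un n)) ∧
    Tendsto (fun n => ∫ x, (un n x - u x) ^ 2 ∂γ) atTop (𝓝 0) ∧
    Tendsto (fun n => ∫ x, ∑' i, (gradCoord W (un n) i x - G i x) ^ 2 ∂γ) atTop (𝓝 0)

/-- `u ∈ H¹_γ(X)`, the domain of the closure of the gradient operator in `L²_γ(X)`. -/
def MemH1gauss (γ : Measure X) (W : WienerBasis γ H) (u : X → ℝ) : Prop :=
  ∃ G, HasHGradient γ W u G

/-- The Dirichlet energy `∫_X |∇_H u|²_H dγ` expressed through the coordinates `G` of `∇_H u`. -/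
def hEnergy (γ : Measure X) (G : ℕ → X → ℝ) : ℝ≥0∞ :=
  ∫⁻ x, ∑' i, ENNReal.ofReal ((G i x) ^ 2) ∂γ

/-- `(σ, f)` is the polar decomposition `D_γ u = f |D_γ u|`, `σ = |D_γ u|`, of the `H`-valued
derivative measure of `u ∈ BV_γ(X)`: it is a finite measure, `‖f‖_H = 1` `σ`-a.e., and the
integration by parts formula `∫ u ∂*_{h_i} φ dγ = −∫ φ [f, h_i]_H dσ` holds for all
cylindrical `φ`. -/
def IsGaussDeriv (γ : Measure X) (W : WienerBasis γ H) (u : X → ℝ)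
    (σ : Measure X) (f : X → H) : Prop :=
  IsFiniteMeasure σ ∧ (∀ᵐ x ∂σ, ‖f x‖ = 1) ∧ AEStronglyMeasurable f σ ∧
    ∀ (i : ℕ) (φ : X → ℝ), IsCylFun W φ →
      ∫ x, u x * (lineDeriv ℝ φ x (W.dir i) - (W.T (W.b i) : X → ℝ) x * φ x) ∂γ
        = -∫ x, φ x * ⟪f x, W.b i⟫ ∂σ

open Classical in
/-- The relaxed functional
`F̄(u) = ∫_X √(𝒰²(u) + |∇_H u|²_H) dγ + |D^s_γ u|(X)` if `u ∈ BV_γ(X)` and `0 ≤ u ≤ 1` γ-a.e.,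
`+∞` otherwise. Here `|∇_H u| = d|D_γ u|/dγ` and `|D^s_γ u| = |D_γ u| − (d|D_γ u|/dγ) γ` is the
singular part coming from the Radon–Nikodym (Lebesgue) decomposition of `D_γ u = f |D_γ u|`. -/
def Fbar (γ : Measure X) (W : WienerBasis γ H) (u : X → ℝ) : ℝ≥0∞ :=
  if h : (∀ᵐ x ∂γ, 0 ≤ u x ∧ u x ≤ 1) ∧
      ∃ σ : Measure X, ∃ f : X → H, IsGaussDeriv γ W u σ f then
    (∫⁻ x, ENNReal.ofReal
        (Real.sqrt ((isopU (u x)) ^ 2 + ((h.2.choose.rnDeriv γ x).toReal) ^ 2)) ∂γ)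
      + h.2.choose.singularPart γ Set.univ
  else ⊤

open Classical in
/-- The Allen–Cahn functional `F_ε(u) = ∫_X (ε/2 |∇_H u|²_H + W(u)/ε) dγ` for `u ∈ H¹_γ(X)`,
`+∞` otherwise. -/
def allenCahn (γ : Measure X) (W : WienerBasis γ H) (Wpot : ℝ → ℝ) (ε : ℝ) (u : X → ℝ) :
    ℝ≥0∞ :=
  if h : MemH1gauss γ W u then
    ∫⁻ x, (ENNReal.ofReal (ε / 2) * ∑' i, ENNReal.ofReal ((h.choose i x) ^ 2)
            + ENNReal.ofReal (Wpot (u x) / ε)) ∂γ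
  else ⊤

/-- Lower semicontinuous envelope (relaxation) of a functional. -/
def lscEnvelope {Y : Type*} [TopologicalSpace Y] (F : Y → ℝ≥0∞) (y : Y) : ℝ≥0∞ :=
  ⨆ G : {G : Y → ℝ≥0∞ // LowerSemicontinuous G ∧ ∀ z, G z ≤ F z}, G.1 y

/-- `Γ`-lower limit, as `ε → 0⁺`, of a family of functionals on a topological space. -/
def gammaLiminf {Y : Type*} [TopologicalSpace Y] (F : ℝ → Y → ℝ≥0∞) (y : Y) : ℝ≥0∞ :=
  ⨆ U ∈ 𝓝 y, Filter.liminf (fun ε => ⨅ z ∈ U, F ε z) (𝓝[>] (0 : ℝ))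

/-- `Γ`-upper limit, as `ε → 0⁺`, of a family of functionals on a topological space. -/
def gammaLimsup {Y : Type*} [TopologicalSpace Y] (F : ℝ → Y → ℝ≥0∞) (y : Y) : ℝ≥0∞ :=
  ⨆ U ∈ 𝓝 y, Filter.limsup (fun ε => ⨅ z ∈ U, F ε z) (𝓝[>] (0 : ℝ))

/-- `Γ`-convergence as `ε → 0⁺`. -/
def GammaConvergesTo {Y : Type*} [TopologicalSpace Y] (F : ℝ → Y → ℝ≥0∞)
    (F₀ : Y → ℝ≥0∞) : Prop :=
  ∀ y, gammaLiminf F y = F₀ y ∧ gammaLimsup F y = F₀ y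

/-- The identity map from `L²_γ(X)` with the weak topology to `L²_γ(X)`. -/
def ofWeak (γ : Measure X) : WeakSpace ℝ (Lp ℝ 2 γ) → Lp ℝ 2 γ := id

/-- A double-well potential `W` with wells at `0` and `1` and quadratic growth. -/
structure IsDoubleWell (Wpot : ℝ → ℝ) : Prop where
  smooth : ContDiff ℝ 1 Wpot
  nonneg : ∀ t, 0 ≤ Wpot t
  zero_iff : ∀ t, Wpot t = 0 ↔ t = 0 ∨ t = 1
  growth : ∃ C > 0, ∀ t, C * (t ^ 2 - 1) ≤ Wpot t

/-!
Write `σ = σˢ + r γ` for the Lebesgue decomposition of `σ` with respect to `γ`, `r = dσ/dγ`.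
Then `∫ ⟪Φ, f⟫ dσ + ∫ g ξ dγ = ∫ ⟪Φ, f⟫ dσˢ + ∫ (r ⟪Φ, f⟫ + g ξ) dγ`. As `‖f‖ = 1`, the first
integrand is at most `1`, and by Cauchy–Schwarz in `ℝ²` the second is at most
`r ‖Φ‖ + g ξ ≤ √(g² + r²)`. Both bounds are attained at once, because `σˢ` and `γ` are carried
by disjoint sets: take `(Φ, ξ) = (f, 0)` on the first and `(r f, g) / √(g² + r²)` on the second.
-/

lemma norm_le_one_and_abs_le_one_of_sq_add_sq_le_one {E : Type*} [SeminormedAddCommGroup E]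
    {v : E} {d : ℝ} (h : ‖v‖ ^ 2 + d ^ 2 ≤ 1) : ‖v‖ ≤ 1 ∧ |d| ≤ 1 :=
  ⟨by simpa using (sq_le_one_iff_abs_le_one ‖v‖).1 (by nlinarith [sq_nonneg d]),
    (sq_le_one_iff_abs_le_one d).1 (by nlinarith [sq_nonneg ‖v‖])⟩

lemma mul_add_mul_le_sqrt_sq_add_sq {a b u v : ℝ} (h : u ^ 2 + v ^ 2 ≤ 1) :
    a * u + b * v ≤ √(a ^ 2 + b ^ 2) :=
  (le_abs_self _).trans <| Real.abs_le_sqrt <| by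
    nlinarith [sq_nonneg (a * v - b * u), sq_nonneg a, sq_nonneg b]

lemma div_sqrt_sq_add_sq_sq_add_sq_le_one (a b : ℝ) :
    (a / √(a ^ 2 + b ^ 2)) ^ 2 + (b / √(a ^ 2 + b ^ 2)) ^ 2 ≤ 1 := by
  rw [div_pow, div_pow, Real.sq_sqrt (by positivity), ← add_div]
  exact div_self_le_one _

lemma mul_div_sqrt_add_mul_div_sqrt (a b : ℝ) :
    a * (a / √(a ^ 2 + b ^ 2)) + b * (b / √(a ^ 2 + b ^ 2)) = √(a ^ 2 + b ^ 2) := by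
  rw [mul_div_assoc', mul_div_assoc', ← add_div, ← sq, ← sq, Real.div_sqrt]

lemma sqrt_sq_add_sq_le_abs_add_abs (a b : ℝ) : √(a ^ 2 + b ^ 2) ≤ |a| + |b| :=
  Real.sqrt_le_iff.2 ⟨by positivity, by nlinarith [sq_abs a, sq_abs b, abs_nonneg a, abs_nonneg b]⟩

lemma norm_smul_sq_add_sq_le_one {E : Type*} [SeminormedAddCommGroup E] [NormedSpace ℝ E]
    {v : E} (hv : ‖v‖ ≤ 1) {c d : ℝ} (h : c ^ 2 + d ^ 2 ≤ 1) : ‖c • v‖ ^ 2 + d ^ 2 ≤ 1 := by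
  rw [norm_smul, mul_pow, Real.norm_eq_abs, sq_abs]
  nlinarith [mul_le_of_le_one_right (sq_nonneg c) (pow_le_one₀ (n := 2) (norm_nonneg v) hv)]

namespace MeasureTheory

variable {α : Type*} [MeasurableSpace α] {μ ν : Measure α}

lemma Integrable.sqrt_sq_add_sq {a b : α → ℝ} (ha : Integrable a ν) (hb : Integrable b ν) :
    Integrable (fun x => √(a x ^ 2 + b x ^ 2)) ν :=
  (ha.abs.add hb.abs).mono'
    (Real.continuous_sqrt.comp_aestronglyMeasurable ((ha.1.pow 2).add (hb.1.pow 2)))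
    (.of_forall fun x => by
      simpa [Real.norm_eq_abs, abs_of_nonneg (Real.sqrt_nonneg _)] using
        sqrt_sq_add_sq_le_abs_add_abs (a x) (b x))

lemma lintegral_ofReal_add_eq_ofReal_integral_add {F : α → ℝ} (hF : Integrable F ν)
    (hF0 : 0 ≤ᵐ[ν] F) {m : ℝ≥0∞} (hm : m ≠ ∞) :
    ∫⁻ x, ENNReal.ofReal (F x) ∂ν + m = ENNReal.ofReal (∫ x, F x ∂ν + m.toReal) := by
  rw [ENNReal.ofReal_add (integral_nonneg_of_ae hF0) ENNReal.toReal_nonneg,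
    ENNReal.ofReal_toReal hm, ofReal_integral_eq_lintegral_ofReal hF hF0]

namespace Measure

lemma integrable_toReal_rnDeriv_mul [SigmaFinite μ] {F : α → ℝ} (hF : Integrable F μ) :
    Integrable (fun x => (μ.rnDeriv ν x).toReal * F x) ν :=
  (integrable_withDensity_iff_integrable_smul' (measurable_rnDeriv μ ν) (rnDeriv_lt_top μ ν)).1
    (hF.mono_measure (withDensity_rnDeriv_le μ ν))

lemma integral_eq_integral_singularPart_add [SigmaFinite μ] [SigmaFinite ν] {F : α → ℝ}
    (hF : Integrable F μ) :
    ∫ x, F x ∂μ = ∫ x, F x ∂(μ.singularPart ν) + ∫ x, (μ.rnDeriv ν x).toReal * F x ∂ν := by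
  conv_lhs => rw [μ.haveLebesgueDecomposition_add ν]
  rw [integral_add_measure (hF.mono_measure (singularPart_le μ ν))
    (hF.mono_measure (withDensity_rnDeriv_le μ ν)),
    integral_withDensity_eq_integral_toReal_smul (measurable_rnDeriv μ ν) (rnDeriv_lt_top μ ν)]
  rfl

end Measure

end MeasureTheory

section Duality

variable {α : Type*} [MeasurableSpace α] {μ ν : Measure α} [IsFiniteMeasure μ]
  {E : Type*} [NormedAddCommGroup E] [InnerProductSpace ℝ E] {f Φ : α → E} {g ξ : α → ℝ}

lemma integrable_inner_of_norm_le_one (hfm : AEStronglyMeasurable f μ)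
    (hf1 : ∀ᵐ x ∂μ, ‖f x‖ ≤ 1) (hΦm : AEStronglyMeasurable Φ μ) (hΦ1 : ∀ x, ‖Φ x‖ ≤ 1) :
    Integrable (fun x => ⟪Φ x, f x⟫) μ :=
  .of_bound (hΦm.inner hfm) 1 <| by
    filter_upwards [hf1] with x hx
    exact (norm_inner_le_norm _ _).trans (mul_le_one₀ (hΦ1 x) (norm_nonneg _) hx)

lemma integral_inner_add_integral_mul_eq [SigmaFinite ν] (hfm : AEStronglyMeasurable f μ)
    (hf1 : ∀ᵐ x ∂μ, ‖f x‖ ≤ 1) (hg : Integrable g ν) (hΦm : AEStronglyMeasurable Φ μ)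
    (hΦ1 : ∀ x, ‖Φ x‖ ≤ 1) (hξm : AEStronglyMeasurable ξ ν) (hξ1 : ∀ x, |ξ x| ≤ 1) :
    ∫ x, ⟪Φ x, f x⟫ ∂μ + ∫ x, g x * ξ x ∂ν =
      ∫ x, ⟪Φ x, f x⟫ ∂(μ.singularPart ν)
        + ∫ x, ((μ.rnDeriv ν x).toReal * ⟪Φ x, f x⟫ + g x * ξ x) ∂ν := by
  have hinner := integrable_inner_of_norm_le_one hfm hf1 hΦm hΦ1
  rw [Measure.integral_eq_integral_singularPart_add (ν := ν) hinner,
    integral_add (Measure.integrable_toReal_rnDeriv_mul (ν := ν) hinner)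
      (hg.mul_bdd hξm (.of_forall hξ1)), add_assoc]

lemma integrable_toReal_rnDeriv_mul_inner_add_mul (hfm : AEStronglyMeasurable f μ)
    (hf1 : ∀ᵐ x ∂μ, ‖f x‖ ≤ 1) (hg : Integrable g ν) (hΦm : AEStronglyMeasurable Φ μ)
    (hΦ1 : ∀ x, ‖Φ x‖ ≤ 1) (hξm : AEStronglyMeasurable ξ ν) (hξ1 : ∀ x, |ξ x| ≤ 1) :
    Integrable (fun x => (μ.rnDeriv ν x).toReal * ⟪Φ x, f x⟫ + g x * ξ x) ν :=
  (Measure.integrable_toReal_rnDeriv_mul (ν := ν)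
    (integrable_inner_of_norm_le_one hfm hf1 hΦm hΦ1)).add (hg.mul_bdd hξm (.of_forall hξ1))

lemma integral_inner_add_integral_mul_le [SigmaFinite ν] (hfm : AEStronglyMeasurable f μ)
    (hf1 : ∀ᵐ x ∂μ, ‖f x‖ ≤ 1) (hg : Integrable g ν) (hΦm : AEStronglyMeasurable Φ μ)
    (hξm : AEStronglyMeasurable ξ ν) (hΦξ : ∀ x, ‖Φ x‖ ^ 2 + ξ x ^ 2 ≤ 1) :
    ∫ x, ⟪Φ x, f x⟫ ∂μ + ∫ x, g x * ξ x ∂ν ≤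
      ∫ x, √(g x ^ 2 + (μ.rnDeriv ν x).toReal ^ 2) ∂ν + (μ.singularPart ν univ).toReal := by
  have hΦ1 x := (norm_le_one_and_abs_le_one_of_sq_add_sq_le_one (hΦξ x)).1
  have hξ1 x := (norm_le_one_and_abs_le_one_of_sq_add_sq_le_one (hΦξ x)).2
  rw [integral_inner_add_integral_mul_eq hfm hf1 hg hΦm hΦ1 hξm hξ1, add_comm]
  refine add_le_add ?_ ?_
  · refine integral_mono_ae
      (integrable_toReal_rnDeriv_mul_inner_add_mul hfm hf1 hg hΦm hΦ1 hξm hξ1)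
      (hg.sqrt_sq_add_sq (Measure.integrable_toReal_rnDeriv (μ := μ))) ?_
    filter_upwards [Measure.ae_rnDeriv_ne_zero_imp_of_ae ν hf1] with x hx
    have hinner : (μ.rnDeriv ν x).toReal * ⟪Φ x, f x⟫ ≤ (μ.rnDeriv ν x).toReal * ‖Φ x‖ := by
      rcases eq_or_ne (μ.rnDeriv ν x) 0 with h0 | h0
      · simp [h0]
      · exact mul_le_mul_of_nonneg_left ((real_inner_le_norm _ _).trans
          (mul_le_of_le_one_right (norm_nonneg _) (hx h0))) ENNReal.toReal_nonneg
    linarith [mul_add_mul_le_sqrt_sq_add_sq (a := g x) (b := (μ.rnDeriv ν x).toReal)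
      ((add_comm _ _).trans_le (hΦξ x))]
  · have hbound : ∀ᵐ x ∂(μ.singularPart ν), ‖⟪Φ x, f x⟫‖ ≤ 1 := by
      filter_upwards [Measure.absolutelyContinuous_of_le (μ.singularPart_le ν) hf1] with x hx
      exact (norm_inner_le_norm _ _).trans (mul_le_one₀ (hΦ1 x) (norm_nonneg _) hx)
    simpa [measureReal_def] using (le_abs_self _).trans (norm_integral_le_of_norm_le_const hbound)

lemma exists_integral_inner_add_integral_mul_eq_of_measurable [SigmaFinite ν]
    (hfm : AEStronglyMeasurable f μ) (hf1 : ∀ᵐ x ∂μ, ‖f x‖ = 1) (hf_le : ∀ x, ‖f x‖ ≤ 1)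
    (hg : Integrable g ν) (hgm : Measurable g) :
    ∃ Φ ξ, AEStronglyMeasurable Φ μ ∧ AEStronglyMeasurable ξ ν ∧
      (∀ x, ‖Φ x‖ ^ 2 + ξ x ^ 2 ≤ 1) ∧
      ∫ x, ⟪Φ x, f x⟫ ∂μ + ∫ x, g x * ξ x ∂ν =
        ∫ x, √(g x ^ 2 + (μ.rnDeriv ν x).toReal ^ 2) ∂ν + (μ.singularPart ν univ).toReal := by
  classical
  obtain ⟨t, htm, hμt, hνt⟩ := Measure.mutuallySingular_singularPart μ ν
  set r : α → ℝ := fun x => (μ.rnDeriv ν x).toReal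
  have hrm : Measurable r := (Measure.measurable_rnDeriv μ ν).ennreal_toReal
  set s : α → ℝ := fun x => √(g x ^ 2 + r x ^ 2)
  have hsm : Measurable s := ((hgm.pow_const 2).add (hrm.pow_const 2)).sqrt
  set Φ : α → E := fun x => t.piecewise (fun x => r x / s x) 1 x • f x
  set ξ : α → ℝ := t.indicator fun x => g x / s x
  have hΦm : AEStronglyMeasurable Φ μ :=
    (((hrm.div hsm).piecewise htm measurable_const).aestronglyMeasurable.smul hfm :)
  have hξm : AEStronglyMeasurable ξ ν := ((hgm.div hsm).indicator htm).aestronglyMeasurable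
  have hΦξ x : ‖Φ x‖ ^ 2 + ξ x ^ 2 ≤ 1 := by
    by_cases hx : x ∈ t
    · simp only [Φ, ξ, piecewise_eq_of_mem _ _ _ hx, indicator_of_mem hx]
      exact norm_smul_sq_add_sq_le_one (hf_le x)
        (by linarith [div_sqrt_sq_add_sq_sq_add_sq_le_one (g x) (r x)])
    · simp only [Φ, ξ, piecewise_eq_of_notMem _ _ _ hx, indicator_of_notMem hx]
      exact norm_smul_sq_add_sq_le_one (hf_le x) (by norm_num)
  refine ⟨Φ, ξ, hΦm, hξm, hΦξ, ?_⟩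
  rw [integral_inner_add_integral_mul_eq hfm (hf1.mono fun x hx => hx.le) hg hΦm
    (fun x => (norm_le_one_and_abs_le_one_of_sq_add_sq_le_one (hΦξ x)).1) hξm
    (fun x => (norm_le_one_and_abs_le_one_of_sq_add_sq_le_one (hΦξ x)).2), add_comm]
  congr 1
  · refine integral_congr_ae ?_
    filter_upwards [mem_ae_iff.2 hνt, Measure.ae_rnDeriv_ne_zero_imp_of_ae ν hf1] with x hxt hfx
    have hinner : r x * ⟪Φ x, f x⟫ = r x * (r x / s x) := by
      rcases eq_or_ne (μ.rnDeriv ν x) 0 with h0 | h0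
      · simp [r, h0]
      · simp only [Φ, piecewise_eq_of_mem _ _ _ hxt, real_inner_smul_left,
          real_inner_self_eq_norm_sq, hfx h0, one_pow, mul_one]
    show r x * ⟪Φ x, f x⟫ + g x * ξ x = √(g x ^ 2 + r x ^ 2)
    rw [hinner, add_comm, show ξ x = g x / s x from indicator_of_mem hxt _]
    exact mul_div_sqrt_add_mul_div_sqrt (g x) (r x)
  · have hΦf : ∀ᵐ x ∂(μ.singularPart ν), ⟪Φ x, f x⟫ = 1 := by
      filter_upwards [measure_eq_zero_iff_ae_notMem.1 hμt,
        Measure.absolutelyContinuous_of_le (μ.singularPart_le ν) hf1] with x hxt hfx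
      simp only [Φ, piecewise_eq_of_notMem _ _ _ hxt, Pi.one_apply, one_smul,
        real_inner_self_eq_norm_sq, hfx, one_pow]
    simp [integral_congr_ae hΦf, measureReal_def]

lemma exists_integral_inner_add_integral_mul_eq [SigmaFinite ν] (hfm : AEStronglyMeasurable f μ)
    (hf1 : ∀ᵐ x ∂μ, ‖f x‖ = 1) (hg : Integrable g ν) :
    ∃ Φ ξ, AEStronglyMeasurable Φ μ ∧ AEStronglyMeasurable ξ ν ∧
      (∀ x, ‖Φ x‖ ^ 2 + ξ x ^ 2 ≤ 1) ∧
      ∫ x, ⟪Φ x, f x⟫ ∂μ + ∫ x, g x * ξ x ∂ν =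
        ∫ x, √(g x ^ 2 + (μ.rnDeriv ν x).toReal ^ 2) ∂ν + (μ.singularPart ν univ).toReal := by
  classical
  set u : α → E := fun x => if ‖f x‖ ≤ 1 then f x else 0
  have hu1 x : ‖u x‖ ≤ 1 := by by_cases h : ‖f x‖ ≤ 1 <;> simp [u, h]
  have huf : u =ᵐ[μ] f := hf1.mono fun x hx => if_pos hx.le
  have hgg' := hg.1.ae_eq_mk
  obtain ⟨Φ, ξ, hΦm, hξm, hΦξ, hsum⟩ := exists_integral_inner_add_integral_mul_eq_of_measurable
    (hfm.congr huf.symm) (huf.symm.rw (fun x v => ‖v‖ = 1) hf1) hu1 (hg.congr hgg')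
    hg.1.stronglyMeasurable_mk.measurable
  refine ⟨Φ, ξ, hΦm, hξm, hΦξ, ?_⟩
  convert hsum using 2
  · exact integral_congr_ae (huf.mono fun x hx => by simp only [hx])
  · exact integral_congr_ae (hgg'.mono fun x hx => by simp only [hx])
  · exact integral_congr_ae (hgg'.mono fun x hx => by simp only [hx])

end Duality

theorem duality_formula_general
    (hγ : IsNondegGaussian γ)
    (g : X → ℝ) (hg : MemLp g ⊤ γ)
    (σ : Measure X) (hσ : IsFiniteMeasure σ)
    (f : X → H) (hf1 : ∀ᵐ x ∂σ, ‖f x‖ = 1) (hfm : AEStronglyMeasurable f σ) :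
    (∫⁻ x, ENNReal.ofReal
        (Real.sqrt ((g x) ^ 2 + ((σ.rnDeriv γ x).toReal) ^ 2)) ∂γ)
      + σ.singularPart γ Set.univ
    = ⨆ p : {p : (X → H) × (X → ℝ) //
          AEStronglyMeasurable p.1 σ ∧ AEStronglyMeasurable p.2 γ ∧
          ∀ x, ‖p.1 x‖ ^ 2 + (p.2 x) ^ 2 ≤ 1},
        ENNReal.ofReal ((∫ x, ⟪p.1.1 x, f x⟫ ∂σ) + ∫ x, g x * p.1.2 x ∂γ) := by
  have : IsProbabilityMeasure γ := hγ.1.1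
  have hgi : Integrable g γ := hg.integrable le_top
  rw [lintegral_ofReal_add_eq_ofReal_integral_add
    (hgi.sqrt_sq_add_sq Measure.integrable_toReal_rnDeriv)
    (.of_forall fun _ => Real.sqrt_nonneg _) (measure_ne_top _ _)]
  refine le_antisymm ?_ (iSup_le fun p => ENNReal.ofReal_le_ofReal ?_)
  · obtain ⟨Φ, ξ, hΦm, hξm, hΦξ, hsum⟩ := exists_integral_inner_add_integral_mul_eq hfm hf1 hgi
    exact le_iSup_of_le ⟨(Φ, ξ), hΦm, hξm, hΦξ⟩ (ENNReal.ofReal_le_ofReal hsum.ge)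
  · exact integral_inner_add_integral_mul_le hfm (hf1.mono fun _ hx => hx.le) hgi
      p.2.1 p.2.2.1 p.2.2.2

/-- **Duality formula (Lemma 4.4).** Let `g ∈ L^∞(X)`, `g ≥ 0`, and let `μ ∈ 𝓜(X,H)` be given
by its polar decomposition `μ = f σ` (`σ = |μ|` finite, `‖f‖_H = 1` `σ`-a.e.), so that the
Radon–Nikodym decomposition of `μ` with respect to `γ` is `μ = h γ + μ^s` with
`|h|_H = dσ/dγ` and `|μ^s| = σ^s`. Then
`∫_X √(g² + |h|²_H) dγ + |μ^s|(X)` equals the supremum of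
`∫_X [Φ, dμ]_H + ∫_X g ξ dγ` over `Φ ∈ L¹_μ(X,H)`, `ξ ∈ L¹_μ(X)` with
`|Φ|²_H + |ξ|² ≤ 1` a.e. in `X`. -/
theorem duality_formula
    (hγ : IsNondegGaussian γ)
    (g : X → ℝ) (hg : MemLp g ⊤ γ) (hg0 : ∀ x, 0 ≤ g x)
    (σ : Measure X) (hσ : IsFiniteMeasure σ)
    (f : X → H) (hf1 : ∀ᵐ x ∂σ, ‖f x‖ = 1) (hfm : AEStronglyMeasurable f σ) :
    (∫⁻ x, ENNReal.ofReal
        (Real.sqrt ((g x) ^ 2 + ((σ.rnDeriv γ x).toReal) ^ 2)) ∂γ)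
      + σ.singularPart γ Set.univ
    = ⨆ p : {p : (X → H) × (X → ℝ) //
          AEStronglyMeasurable p.1 σ ∧ AEStronglyMeasurable p.2 γ ∧
          ∀ x, ‖p.1 x‖ ^ 2 + (p.2 x) ^ 2 ≤ 1},
        ENNReal.ofReal ((∫ x, ⟪p.1.1 x, f x⟫ ∂σ) + ∫ x, g x * p.1.2 x ∂γ) :=
  duality_formula_general hγ g hg σ hσ f hf1 hfm
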